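/- arXiv:1509.00126 — 4 statements merged into one kernel-verified Lean document; each statement's English description precedes it below -/
import Mathlib

section
/- Theorem 2(c): If (1−δ)·f_α > c > (1−δ)·(f_α+f_β)/2 and (1+δ(n_α−1))·f_α + (1+δ(n_α+n_β−2))·f_β > 2c, then a network g is strongly efficient if and only if there exists a type-α agent i₀ ∈ A such that the edge set of g consists of all pairs of distinct type-α agents together with the pairs {i₀, j} for every type-β agent j ∈ B (in particular, no two type-β agents are linked and every type-β agent is linked only to i₀). -/
open Finset

noncomputable section

open scoped Classical

variable {I : Type*}

/-- Benefit function of the two-type connections model: a connection to a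
type-α agent (a member of `A`) yields `fα`, a connection to a type-β agent
yields `fβ` (before spatial discounting). -/
def fTheta [DecidableEq I] (A : Finset I) (fα fβ : ℝ) (j : I) : ℝ :=
  if j ∈ A then fα else fβ

/-- One-period payoff of agent `i` in network `g`:
`u_i(g) = Σ_{j ≠ i reachable from i} δ^(d_g(i,j)-1) f(θ_j) − deg_g(i)·c`. -/
def payoff [Fintype I] (f : I → ℝ) (c δ : ℝ) (g : SimpleGraph I) (i : I) : ℝ :=
  (∑ j ∈ univ.filter fun j => j ≠ i ∧ g.Reachable i j, δ ^ (g.dist i j - 1) * f j)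
    - ((univ.filter fun j => g.Adj i j).card : ℝ) * c

/-- Total one-period payoff `ν(g) = Σ_i u_i(g)`. -/
def totalPayoff [Fintype I] (f : I → ℝ) (c δ : ℝ) (g : SimpleGraph I) : ℝ :=
  ∑ i, payoff f c δ g i

/-- A network is strongly efficient if it maximizes the total payoff. -/
def StronglyEfficient [Fintype I] (f : I → ℝ) (c δ : ℝ) (g : SimpleGraph I) : Prop :=
  ∀ g' : SimpleGraph I, totalPayoff f c δ g' ≤ totalPayoff f c δ g

/-- A network `g` is core-stable if no subgroup `I'` of agents, together with a
network `g'` all of whose links are inside `I'`, gives every member of `I'` a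
weakly higher payoff and some member a strictly higher payoff. -/
def CoreStable [Fintype I] (f : I → ℝ) (c δ : ℝ) (g : SimpleGraph I) : Prop :=
  ¬ ∃ (I' : Finset I) (g' : SimpleGraph I),
      (∀ i j : I, g'.Adj i j → i ∈ I' ∧ j ∈ I') ∧
      (∀ i ∈ I', payoff f c δ g i ≤ payoff f c δ g' i) ∧
      (∃ i ∈ I', payoff f c δ g i < payoff f c δ g' i)

/-- The network whose links are exactly the pairs with at least one endpoint in `A`. -/
def withCore (A : Finset I) : SimpleGraph I where
  Adj i j := i ≠ j ∧ (i ∈ A ∨ j ∈ A)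
  symm := ⟨fun i j h => ⟨h.1.symm, h.2.symm⟩⟩
  loopless := ⟨fun i h => h.1 rfl⟩

/-- The clique on `A`: exactly all pairs of distinct members of `A` are linked. -/
def cliqueOn (A : Finset I) : SimpleGraph I where
  Adj i j := i ≠ j ∧ i ∈ A ∧ j ∈ A
  symm := ⟨fun i j h => ⟨h.1.symm, h.2.2, h.2.1⟩⟩
  loopless := ⟨fun i h => h.1 rfl⟩

/-- Clique on `A` together with the links `{i₀, j}` for every agent `j ∉ A`. -/
def coreStar (A : Finset I) (i₀ : I) : SimpleGraph I where
  Adj i j := i ≠ j ∧ ((i ∈ A ∧ j ∈ A) ∨ (i = i₀ ∧ j ∉ A) ∨ (j = i₀ ∧ i ∉ A))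
  symm := by
    refine ⟨?_⟩
    rintro i j ⟨hne, h⟩
    refine ⟨hne.symm, ?_⟩
    rcases h with h | h | h
    · exact Or.inl ⟨h.2, h.1⟩
    · exact Or.inr (Or.inr h)
    · exact Or.inr (Or.inl h)
  loopless := ⟨fun i h => h.1 rfl⟩

/-- The star on all agents centered at `i₀`. -/
def starAll (i₀ : I) : SimpleGraph I where
  Adj i j := i ≠ j ∧ (i = i₀ ∨ j = i₀)
  symm := ⟨fun i j h => ⟨h.1.symm, h.2.symm⟩⟩
  loopless := ⟨fun i h => h.1 rfl⟩

/-- The star on the agents in `A`, centered at `i₀`. -/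
def starOn (A : Finset I) (i₀ : I) : SimpleGraph I where
  Adj i j := i ≠ j ∧ (i = i₀ ∨ j = i₀) ∧ i ∈ A ∧ j ∈ A
  symm := ⟨fun i j h => ⟨h.1.symm, h.2.1.symm, h.2.2.2, h.2.2.1⟩⟩
  loopless := ⟨fun i h => h.1 rfl⟩

/-! Write `ν(g)` as the sum over ordered pairs of half the value of the pair,
`δ^(d-1)·(f i + f j)/2 - c·[i ~ j]`. A pair is worth at most what it would be worth linked or at
distance two. Between α agents a link beats distance two since `(1-δ)fα > c`, so the α–α pairs
are worth at most the α-clique. For α–β and β–β pairs distance two beats a link, since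
`c > (1-δ)(fα+fβ)/2`, and a β–β link costs more than two α–β links, again since `(1-δ)fα > c`;
so a β agent that is not isolated gets at most what a leaf of `coreStar` gets: one link, to an
α agent, and distance two to everybody else. An isolated β agent adds nothing, which is less by
the last hypothesis. Equality forces the α-clique, a single α-neighbour for each β agent and
distance two between β agents, hence one common α-neighbour of all β agents. -/

namespace SimpleGraph

variable {V : Type*} {G : SimpleGraph V} {u v : V}

theorem dist_eq_two_iff :
    G.dist u v = 2 ↔ u ≠ v ∧ ¬ G.Adj u v ∧ (G.commonNeighbors u v).Nonempty := by
  rw [← edist_eq_two_iff]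
  constructor
  · intro h
    have hr : G.Reachable u v := Reachable.of_dist_ne_zero (by omega)
    rw [← hr.coe_dist_eq_edist, h]
    rfl
  · intro h
    have hr : G.Reachable u v := reachable_of_edist_ne_top (by simp [h])
    exact_mod_cast hr.coe_dist_eq_edist.trans h

theorem eq_of_reachable_of_forall_not_adj (h : ∀ w, ¬ G.Adj u w) (hr : G.Reachable u v) :
    u = v := by
  obtain ⟨p⟩ := hr
  cases p with
  | nil => rfl
  | cons ha _ => exact absurd ha (h _)

theorem not_adj_of_card_filter_erase_eq_zero [DecidableEq V] {S : Finset V}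
    (h : #{w ∈ S.erase u | G.Adj u w} = 0) (hv : v ∈ S) : ¬ G.Adj u v := fun hadj =>
  filter_eq_empty_iff.1 (card_eq_zero.1 h) (mem_erase.2 ⟨hadj.ne.symm, hv⟩) hadj

theorem forall_not_adj_of_card_filter_eq_zero [Fintype V] [DecidableEq V] {S : Finset V}
    (h : #{w ∈ S | G.Adj u w} = 0) (h' : #{w ∈ Sᶜ.erase u | G.Adj u w} = 0) (w : V) :
    ¬ G.Adj u w := by
  by_cases hw : w ∈ S
  · exact filter_eq_empty_iff.1 (card_eq_zero.1 h) hw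
  · exact not_adj_of_card_filter_erase_eq_zero h' (mem_compl.2 hw)

end SimpleGraph

section PairValue

variable (f : I → ℝ) (c δ : ℝ) (g : SimpleGraph I)

/-- Half of what the pair `{i, j}` adds to `ν`, so that `ν` is the sum over ordered pairs: the
average of the two discounted benefits minus the link cost of one end. -/
def pairValue (i j : I) : ℝ :=
  (if i ≠ j ∧ g.Reachable i j then δ ^ (g.dist i j - 1) * ((f i + f j) / 2) else 0)
    - if g.Adj i j then c else 0

theorem pairValue_comm (i j : I) : pairValue f c δ g i j = pairValue f c δ g j i := by
  simp only [pairValue, ne_comm (a := i), g.reachable_comm (u := i), g.dist_comm (u := i),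
    add_comm (f i), g.adj_comm i]

@[simp]
theorem pairValue_self (i : I) : pairValue f c δ g i i = 0 := by
  simp [pairValue]

theorem totalPayoff_eq_sum_pairValue [Fintype I] :
    totalPayoff f c δ g = ∑ i, ∑ j, pairValue f c δ g i j := by
  set w : I → I → ℝ := fun i j => if i ≠ j ∧ g.Reachable i j then δ ^ (g.dist i j - 1) else 0
  have hw : ∀ i j, w i j = w j i := fun i j => by
    simp only [w, ne_comm (a := i), g.reachable_comm (u := i), g.dist_comm (u := i)]
  have hpayoff : ∀ i, payoff f c δ g i = ∑ j, (w i j * f j - if g.Adj i j then c else 0) := by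
    intro i
    rw [payoff, sum_sub_distrib, sum_filter, card_filter, Nat.cast_sum, sum_mul]
    congr 1 <;> refine sum_congr rfl fun j _ => ?_
    · simp only [w, ne_comm (a := i)]
      split_ifs <;> simp
    · split_ifs <;> simp
  have hswap : ∑ i, ∑ j, w i j * f j = ∑ i, ∑ j, w i j * f i := by
    rw [sum_comm]
    simp only [hw]
  have hpair : ∀ i j, pairValue f c δ g i j
      = (w i j * f j + w i j * f i) / 2 - if g.Adj i j then c else 0 := fun i j => by
    simp only [pairValue, w]
    split_ifs <;> ring
  simp only [totalPayoff, hpayoff, hpair, sum_sub_distrib, ← sum_div, sum_add_distrib, hswap]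
  ring

end PairValue

section PairBounds

variable {f : I → ℝ} {c δ : ℝ} {g : SimpleGraph I} {i j : I}

theorem pairValue_of_adj (h : g.Adj i j) : pairValue f c δ g i j = (f i + f j) / 2 - c := by
  simp [pairValue, h.ne, h.reachable, h, SimpleGraph.dist_eq_one_iff_adj.2 h]

theorem pairValue_of_dist_eq_two (h : g.dist i j = 2) :
    pairValue f c δ g i j = δ * ((f i + f j) / 2) := by
  obtain ⟨hij, hna, -⟩ := SimpleGraph.dist_eq_two_iff.1 h
  simp [pairValue, hij, hna, SimpleGraph.Reachable.of_dist_ne_zero (h ▸ two_ne_zero), h]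

theorem pairValue_eq_zero_of_forall_not_adj (h : ∀ k, ¬ g.Adj i k) (j : I) :
    pairValue f c δ g i j = 0 := by
  have hr : ¬ (i ≠ j ∧ g.Reachable i j) := fun hr =>
    hr.1 (SimpleGraph.eq_of_reachable_of_forall_not_adj h hr.2)
  simp [pairValue, hr, h j]

theorem pairValue_le_of_not_adj (hδ0 : 0 ≤ δ) (hδ1 : δ ≤ 1) (hm : 0 ≤ (f i + f j) / 2)
    (h : ¬ g.Adj i j) : pairValue f c δ g i j ≤ δ * ((f i + f j) / 2) := by
  simp only [pairValue, h, if_false, sub_zero]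
  split_ifs with hr
  · have h2 : 1 < g.dist i j := hr.2.one_lt_dist_of_ne_of_not_adj hr.1 h
    gcongr
    exact pow_le_of_le_one hδ0 hδ1 (by omega)
  · positivity

theorem pairValue_lt_of_not_adj (hδ0 : 0 < δ) (hδ1 : δ < 1) (hm : 0 < (f i + f j) / 2)
    (h : ¬ g.Adj i j) (h2 : g.dist i j ≠ 2) :
    pairValue f c δ g i j < δ * ((f i + f j) / 2) := by
  simp only [pairValue, h, if_false, sub_zero]
  split_ifs with hr
  · have h3 : 2 < g.dist i j := by
      have := hr.2.one_lt_dist_of_ne_of_not_adj hr.1 h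
      omega
    gcongr
    exact pow_lt_self_of_lt_one₀ hδ0 hδ1 (by omega)
  · positivity

/-- The value of `pairValue` on a pair that is linked or at distance two: the distance-two value
minus the net cost of the link. -/
def pairBound (f : I → ℝ) (c δ : ℝ) (g : SimpleGraph I) (i j : I) : ℝ :=
  δ * ((f i + f j) / 2) - if g.Adj i j then c - (1 - δ) * ((f i + f j) / 2) else 0

theorem pairValue_le_pairBound (hδ0 : 0 ≤ δ) (hδ1 : δ ≤ 1) (hm : 0 ≤ (f i + f j) / 2) :
    pairValue f c δ g i j ≤ pairBound f c δ g i j := by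
  by_cases h : g.Adj i j
  · rw [pairValue_of_adj h, pairBound, if_pos h]
    linarith
  · rw [pairBound, if_neg h, sub_zero]
    exact pairValue_le_of_not_adj hδ0 hδ1 hm h

theorem pairValue_eq_pairBound_of_adj_or_dist_eq_two (h : g.Adj i j ∨ g.dist i j = 2) :
    pairValue f c δ g i j = pairBound f c δ g i j := by
  rcases h with h | h
  · rw [pairValue_of_adj h, pairBound, if_pos h]
    ring
  · rw [pairValue_of_dist_eq_two h, pairBound, if_neg (SimpleGraph.dist_eq_two_iff.1 h).2.1,
      sub_zero]

theorem pairValue_eq_pairBound_iff (hδ0 : 0 < δ) (hδ1 : δ < 1) (hm : 0 < (f i + f j) / 2) :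
    pairValue f c δ g i j = pairBound f c δ g i j ↔ g.Adj i j ∨ g.dist i j = 2 := by
  refine ⟨fun heq => ?_, pairValue_eq_pairBound_of_adj_or_dist_eq_two⟩
  by_contra! h
  rw [pairBound, if_neg h.1, sub_zero] at heq
  exact (pairValue_lt_of_not_adj hδ0 hδ1 hm h.1 h.2).ne heq

end PairBounds

section Sums

variable {f : I → ℝ} {c δ : ℝ} {g : SimpleGraph I} {i : I} {S : Finset I}

theorem sum_pairBound {μ : ℝ} (hS : ∀ j ∈ S, (f i + f j) / 2 = μ) :
    ∑ j ∈ S, pairBound f c δ g i j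
      = #S * (δ * μ) - #{j ∈ S | g.Adj i j} * (c - (1 - δ) * μ) := by
  rw [sum_congr rfl fun j hj => by rw [pairBound, hS j hj], sum_sub_distrib, sum_const,
    nsmul_eq_mul, ← sum_filter, sum_const, nsmul_eq_mul]

theorem sum_pairValue_le_sum_pairBound (hδ0 : 0 ≤ δ) (hδ1 : δ ≤ 1)
    (hS : ∀ j ∈ S, 0 ≤ (f i + f j) / 2) :
    ∑ j ∈ S, pairValue f c δ g i j ≤ ∑ j ∈ S, pairBound f c δ g i j :=
  sum_le_sum fun j hj => pairValue_le_pairBound hδ0 hδ1 (hS j hj)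

theorem sum_pairValue_eq_sum_pairBound_iff (hδ0 : 0 < δ) (hδ1 : δ < 1)
    (hS : ∀ j ∈ S, 0 < (f i + f j) / 2) :
    ∑ j ∈ S, pairValue f c δ g i j = ∑ j ∈ S, pairBound f c δ g i j
      ↔ ∀ j ∈ S, g.Adj i j ∨ g.dist i j = 2 := by
  rw [sum_eq_sum_iff_of_le fun j hj => pairValue_le_pairBound hδ0.le hδ1.le (hS j hj).le]
  exact forall₂_congr fun j hj => pairValue_eq_pairBound_iff hδ0 hδ1 (hS j hj)

variable [DecidableEq I] {x : ℝ}

theorem pairValue_le_ite (hf : ∀ i ∈ S, f i = x) (hx : 0 ≤ x) (hδ0 : 0 ≤ δ) (hδ1 : δ ≤ 1)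
    (hxc : δ * x < x - c) {j : I} (hi : i ∈ S) (hj : j ∈ S) :
    pairValue f c δ g i j ≤ if i = j then 0 else x - c := by
  rcases eq_or_ne i j with rfl | hij
  · simp
  have hm : (f i + f j) / 2 = x := by rw [hf i hi, hf j hj]; ring
  have hle := pairValue_le_pairBound (c := c) (g := g) hδ0 hδ1 (hm ▸ hx)
  rw [pairBound, hm] at hle
  rw [if_neg hij]
  split_ifs at hle <;> linarith

theorem sum_sum_ite_eq_zero_else (y : ℝ) :
    ∑ i ∈ S, ∑ j ∈ S, (if i = j then 0 else y) = #S * (#S - 1) * y := by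
  have hrow : ∀ i ∈ S, ∑ j ∈ S, (if i = j then 0 else y) = (#S - 1) * y := fun i hi => by
    have hsub : ∀ j, (if i = j then 0 else y) = y - if i = j then y else 0 := fun j => by
      split_ifs <;> ring
    simp only [hsub, sum_sub_distrib, sum_const, sum_ite_eq, if_pos hi, nsmul_eq_mul]
    ring
  rw [sum_congr rfl hrow, sum_const, nsmul_eq_mul, mul_assoc]

theorem sum_sum_pairValue_le (hf : ∀ i ∈ S, f i = x) (hx : 0 ≤ x) (hδ0 : 0 ≤ δ) (hδ1 : δ ≤ 1)
    (hxc : δ * x < x - c) :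
    ∑ i ∈ S, ∑ j ∈ S, pairValue f c δ g i j ≤ #S * (#S - 1) * (x - c) := by
  rw [← sum_sum_ite_eq_zero_else]
  exact sum_le_sum fun i hi => sum_le_sum fun j hj => pairValue_le_ite hf hx hδ0 hδ1 hxc hi hj

theorem sum_sum_pairValue_of_isClique (hf : ∀ i ∈ S, f i = x) (hS : g.IsClique S) :
    ∑ i ∈ S, ∑ j ∈ S, pairValue f c δ g i j = #S * (#S - 1) * (x - c) := by
  rw [← sum_sum_ite_eq_zero_else]
  refine sum_congr rfl fun i hi => sum_congr rfl fun j hj => ?_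
  split_ifs with hij
  · simp [hij]
  · rw [pairValue_of_adj (hS hi hj hij), hf i hi, hf j hj]
    ring

theorem isClique_of_sum_sum_pairValue_eq (hf : ∀ i ∈ S, f i = x) (hx : 0 ≤ x) (hδ0 : 0 ≤ δ)
    (hδ1 : δ ≤ 1) (hxc : δ * x < x - c)
    (h : ∑ i ∈ S, ∑ j ∈ S, pairValue f c δ g i j = #S * (#S - 1) * (x - c)) :
    g.IsClique S := by
  rw [← sum_sum_ite_eq_zero_else, sum_eq_sum_iff_of_le fun i hi => sum_le_sum fun j hj =>
    pairValue_le_ite hf hx hδ0 hδ1 hxc hi hj] at h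
  intro i hi j hj hij
  have hpair := (sum_eq_sum_iff_of_le fun k hk => pairValue_le_ite hf hx hδ0 hδ1 hxc hi hk).1
    (h i hi) j hj
  rw [if_neg hij] at hpair
  by_contra hadj
  have hle := pairValue_le_of_not_adj (f := f) (c := c) hδ0 hδ1
    (by rw [hf i hi, hf j hj]; linarith) hadj
  rw [hf i hi, hf j hj] at hle
  linarith

end Sums

theorem sum_sum_eq_sum_sum_add_sum_compl [Fintype I] [DecidableEq I] (A : Finset I)
    (s : I → I → ℝ) (hs : ∀ i j, s i j = s j i) :
    ∑ i, ∑ j, s i j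
      = ∑ a ∈ A, ∑ a' ∈ A, s a a' + ∑ b ∈ Aᶜ, (2 * ∑ a ∈ A, s b a + ∑ b' ∈ Aᶜ, s b b') := by
  have hcross : ∑ a ∈ A, ∑ b ∈ Aᶜ, s a b = ∑ b ∈ Aᶜ, ∑ a ∈ A, s b a := by
    rw [sum_comm]
    simp only [hs]
  simp only [← sum_add_sum_compl A, sum_add_distrib, mul_sum, two_mul, hcross]
  ring

section CoreStar

variable {A : Finset I} {i₀ : I}

theorem coreStar_adj_center (hi₀ : i₀ ∈ A) {x : I} (hx : x ≠ i₀) : (coreStar A i₀).Adj x i₀ := by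
  by_cases hxA : x ∈ A
  · exact ⟨hx, Or.inl ⟨hxA, hi₀⟩⟩
  · exact ⟨hx, Or.inr (Or.inr ⟨rfl, hxA⟩)⟩

theorem coreStar_adj_or_dist_eq_two (hi₀ : i₀ ∈ A) {i j : I} (hij : i ≠ j) :
    (coreStar A i₀).Adj i j ∨ (coreStar A i₀).dist i j = 2 := by
  by_cases h : (coreStar A i₀).Adj i j
  · exact Or.inl h
  have hi : i ≠ i₀ := by rintro rfl; exact h (coreStar_adj_center hi₀ hij.symm).symm
  have hj : j ≠ i₀ := by rintro rfl; exact h (coreStar_adj_center hi₀ hij)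
  exact Or.inr (SimpleGraph.dist_eq_two_iff.2
    ⟨hij, h, i₀, coreStar_adj_center hi₀ hi, coreStar_adj_center hi₀ hj⟩)

theorem coreStar_adj_of_notMem (hi₀ : i₀ ∈ A) {b x : I} (hb : b ∉ A) :
    (coreStar A i₀).Adj b x ↔ x = i₀ := by
  refine ⟨?_, ?_⟩
  · rintro ⟨-, ⟨hbA, -⟩ | ⟨rfl, -⟩ | ⟨hx, -⟩⟩
    · exact absurd hbA hb
    · exact absurd hi₀ hb
    · exact hx
  · rintro rfl
    exact coreStar_adj_center hi₀ fun h => hb (h ▸ hi₀)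

theorem exists_eq_coreStar_of_isClique {g : SimpleGraph I} {b₀ : I} (hb₀ : b₀ ∉ A)
    (hclique : g.IsClique (A : Set I)) (hBB : ∀ b ∉ A, ∀ b' ∉ A, ¬ g.Adj b b')
    (hBA : ∀ b ∉ A, #{a ∈ A | g.Adj b a} = 1)
    (hdist : ∀ b ∉ A, ∀ b' ∉ A, b ≠ b' → g.dist b b' = 2) :
    ∃ i₀ ∈ A, g = coreStar A i₀ := by
  have hnbr : ∀ b ∉ A, ∃ a ∈ A, ∀ x ∈ A, g.Adj b x ↔ x = a := fun b hb => by
    obtain ⟨a, ha⟩ := card_eq_one.1 (hBA b hb)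
    have hmem : ∀ x, x ∈ A ∧ g.Adj b x ↔ x = a := fun x => by
      simpa using congrArg (x ∈ ·) ha
    exact ⟨a, ((hmem a).2 rfl).1, fun x hx => by simpa [hx] using hmem x⟩
  obtain ⟨i₀, hi₀, h₀⟩ := hnbr b₀ hb₀
  have hall : ∀ b ∉ A, ∀ x ∈ A, g.Adj b x ↔ x = i₀ := fun b hb => by
    obtain ⟨a, ha, hb'⟩ := hnbr b hb
    suffices a = i₀ from this ▸ hb'
    rcases eq_or_ne b b₀ with rfl | hne
    · exact (h₀ a ha).1 ((hb' a ha).2 rfl)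
    · obtain ⟨-, -, x, hbx, hb₀x⟩ := SimpleGraph.dist_eq_two_iff.1 (hdist b hb b₀ hb₀ hne)
      have hxA : x ∈ A := by_contra fun h => hBB b hb x h hbx
      exact ((hb' x hxA).1 hbx).symm.trans ((h₀ x hxA).1 hb₀x)
  refine ⟨i₀, hi₀, ?_⟩
  ext i j
  by_cases hi : i ∈ A <;> by_cases hj : j ∈ A
  · exact ⟨fun h => ⟨h.ne, Or.inl ⟨hi, hj⟩⟩, fun h => hclique hi hj h.1⟩
  · rw [g.adj_comm, hall j hj i hi, SimpleGraph.adj_comm, coreStar_adj_of_notMem hi₀ hj]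
  · rw [hall i hi j hj, coreStar_adj_of_notMem hi₀ hi]
  · rw [coreStar_adj_of_notMem hi₀ hi]
    exact iff_of_false (hBB i hi j hj) fun h => hj (h ▸ hi₀)

end CoreStar

section LinkCount

variable {p q : ℕ} {u v : ℝ}

theorem two_mul_le_two_mul_mul_add_mul (hu : 0 < u) (huv : 2 * u < v) (hpq : ¬ (p = 0 ∧ q = 0)) :
    2 * u ≤ 2 * p * u + q * v := by
  rcases Nat.eq_zero_or_pos p with rfl | hp
  · have hq : (1 : ℝ) ≤ q := Nat.one_le_cast.2 (Nat.pos_of_ne_zero fun hq => hpq ⟨rfl, hq⟩)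
    push_cast
    nlinarith
  · have hp' : (1 : ℝ) ≤ p := Nat.one_le_cast.2 hp
    have hq : (0 : ℝ) ≤ q := q.cast_nonneg
    nlinarith

theorem two_mul_eq_two_mul_mul_add_mul_iff (hu : 0 < u) (huv : 2 * u < v) :
    2 * u = 2 * p * u + q * v ↔ p = 1 ∧ q = 0 := by
  refine ⟨fun h => ?_, fun ⟨hp, hq⟩ => by simp [hp, hq]⟩
  have hq : (0 : ℝ) ≤ q := q.cast_nonneg
  rcases Nat.eq_zero_or_pos p with rfl | hp
  · rcases Nat.eq_zero_or_pos q with rfl | hq'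
    · simp at h; linarith
    · have : (1 : ℝ) ≤ q := Nat.one_le_cast.2 hq'
      push_cast at h
      nlinarith
  · have hp' : (1 : ℝ) ≤ p := Nat.one_le_cast.2 hp
    have hq0 : (q : ℝ) * v = 0 := by nlinarith
    have hp1 : (p : ℝ) = 1 := by nlinarith
    exact ⟨by exact_mod_cast hp1,
      by exact_mod_cast (mul_eq_zero.1 hq0).resolve_right (by linarith)⟩

end LinkCount

section TwoTypes

variable [DecidableEq I] {A : Finset I} {fα fβ : ℝ} {a b b' : I}

theorem fTheta_of_mem (h : a ∈ A) : fTheta A fα fβ a = fα := if_pos h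

theorem fTheta_of_notMem (h : b ∉ A) : fTheta A fα fβ b = fβ := if_neg h

theorem fTheta_average_of_notMem_of_mem (hb : b ∉ A) (ha : a ∈ A) :
    (fTheta A fα fβ b + fTheta A fα fβ a) / 2 = (fα + fβ) / 2 := by
  rw [fTheta_of_notMem hb, fTheta_of_mem ha, add_comm]

theorem fTheta_average_of_notMem_of_notMem (hb : b ∉ A) (hb' : b' ∉ A) :
    (fTheta A fα fβ b + fTheta A fα fβ b') / 2 = fβ := by
  rw [fTheta_of_notMem hb, fTheta_of_notMem hb', add_self_div_two]

variable [Fintype I] {f : I → ℝ} {c δ : ℝ} {g : SimpleGraph I}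

/-- The share of `ν` carried by a type-β agent `b`: all of its pairs with type-α agents and its
half of its pairs with other type-β agents. -/
def betaShare (A : Finset I) (f : I → ℝ) (c δ : ℝ) (g : SimpleGraph I) (b : I) : ℝ :=
  2 * ∑ a ∈ A, pairValue f c δ g b a + ∑ b' ∈ Aᶜ, pairValue f c δ g b b'

theorem totalPayoff_eq_add_sum_betaShare (A : Finset I) :
    totalPayoff f c δ g
      = ∑ a ∈ A, ∑ a' ∈ A, pairValue f c δ g a a' + ∑ b ∈ Aᶜ, betaShare A f c δ g b := by
  rw [totalPayoff_eq_sum_pairValue, sum_sum_eq_sum_sum_add_sum_compl A _ (pairValue_comm f c δ g)]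
  rfl

theorem betaShare_eq_zero_of_forall_not_adj (h : ∀ x, ¬ g.Adj b x) :
    betaShare A f c δ g b = 0 := by
  simp [betaShare, pairValue_eq_zero_of_forall_not_adj h]

/-- What a type-β leaf attached to an α agent adds to `ν`: the link itself to both ends, the
paths of length two to the other α agents to both ends, and its own share of the paths of
length two to the other β agents. -/
def leafValue (A : Finset I) (fα fβ c δ : ℝ) : ℝ :=
  (1 + δ * (#A - 1)) * fα + (1 + δ * (#A + #Aᶜ - 2)) * fβ - 2 * c

def optimalValue (A : Finset I) (fα fβ c δ : ℝ) : ℝ :=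
  #A * (#A - 1) * (fα - c) + #Aᶜ * leafValue A fα fβ c δ

theorem betaShare_le_leafValue (hb : b ∉ A) (hfαβ : fβ < fα) (hfβ : 0 < fβ) (hδ0 : 0 < δ)
    (hδ1 : δ < 1) (h1 : (1 - δ) * fα > c) (h2 : c > (1 - δ) * ((fα + fβ) / 2))
    (h3 : 0 < leafValue A fα fβ c δ) :
    betaShare A (fTheta A fα fβ) c δ g b ≤ leafValue A fα fβ c δ ∧
      (betaShare A (fTheta A fα fβ) c δ g b = leafValue A fα fβ c δ →
        (∀ b' ∉ A, ¬ g.Adj b b') ∧ #{a ∈ A | g.Adj b a} = 1 ∧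
          ∀ b' ∉ A, b ≠ b' → g.dist b b' = 2) := by
  set F := (fα + fβ) / 2
  have hF : 0 < F := by simp only [F]; linarith
  set kα := #{a ∈ A | g.Adj b a}
  set kβ := #{b' ∈ Aᶜ.erase b | g.Adj b b'}
  have hmα : ∀ a ∈ A, (fTheta A fα fβ b + fTheta A fα fβ a) / 2 = F := fun a ha =>
    fTheta_average_of_notMem_of_mem hb ha
  have hmβ : ∀ b' ∈ Aᶜ.erase b, (fTheta A fα fβ b + fTheta A fα fβ b') / 2 = fβ := fun b' hb' =>
    fTheta_average_of_notMem_of_notMem hb (mem_compl.1 (mem_of_mem_erase hb'))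
  by_cases hiso : kα = 0 ∧ kβ = 0
  · rw [betaShare_eq_zero_of_forall_not_adj
      (SimpleGraph.forall_not_adj_of_card_filter_eq_zero hiso.1 hiso.2)]
    exact ⟨h3.le, fun h => absurd h h3.ne⟩
  have hα : ∑ a ∈ A, pairValue (fTheta A fα fβ) c δ g b a
      ≤ #A * (δ * F) - kα * (c - (1 - δ) * F) :=
    (sum_pairValue_le_sum_pairBound hδ0.le hδ1.le fun a ha => hmα a ha ▸ hF.le).trans_eq
      (sum_pairBound hmα)
  have hβ : ∑ b' ∈ Aᶜ.erase b, pairValue (fTheta A fα fβ) c δ g b b'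
      ≤ ∑ b' ∈ Aᶜ.erase b, pairBound (fTheta A fα fβ) c δ g b b' :=
    sum_pairValue_le_sum_pairBound hδ0.le hδ1.le fun b' hb' => by rw [hmβ b' hb']; exact hfβ.le
  have hβ' : ∑ b' ∈ Aᶜ.erase b, pairBound (fTheta A fα fβ) c δ g b b'
      = (#Aᶜ - 1) * (δ * fβ) - kβ * (c - (1 - δ) * fβ) := by
    rw [sum_pairBound hmβ, cast_card_erase_of_mem (mem_compl.2 hb)]
  have hshare : betaShare A (fTheta A fα fβ) c δ g b
      = 2 * ∑ a ∈ A, pairValue (fTheta A fα fβ) c δ g b a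
        + ∑ b' ∈ Aᶜ.erase b, pairValue (fTheta A fα fβ) c δ g b b' := by
    rw [betaShare, sum_erase Aᶜ (pairValue_self _ c δ g b)]
  have hleaf : leafValue A fα fβ c δ
      = 2 * (#A * (δ * F) - (c - (1 - δ) * F)) + (#Aᶜ - 1) * (δ * fβ) := by
    simp only [leafValue, F]; ring
  have hLα : 0 < c - (1 - δ) * F := by linarith
  -- a β–β link costs more than two α–β links
  have hLβ : 2 * (c - (1 - δ) * F) < c - (1 - δ) * fβ := by
    have : 2 * ((1 - δ) * F) = (1 - δ) * fα + (1 - δ) * fβ := by simp only [F]; ring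
    linarith
  have hcost := two_mul_le_two_mul_mul_add_mul hLα hLβ hiso
  refine ⟨by linarith, fun heq => ?_⟩
  obtain ⟨hk1, hk0⟩ := (two_mul_eq_two_mul_mul_add_mul_iff (p := kα) (q := kβ) hLα hLβ).1
    (by linarith)
  have hdist := (sum_pairValue_eq_sum_pairBound_iff hδ0 hδ1 fun b' hb' => (hmβ b' hb').symm ▸ hfβ).1
    (by linarith)
  have hnadj : ∀ b' ∉ A, ¬ g.Adj b b' := fun b' hb' =>
    SimpleGraph.not_adj_of_card_filter_erase_eq_zero hk0 (mem_compl.2 hb')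
  exact ⟨hnadj, hk1, fun b' hb' hne =>
    (hdist b' (mem_erase.2 ⟨hne.symm, mem_compl.2 hb'⟩)).resolve_left (hnadj b' hb')⟩

end TwoTypes

section Optimum

variable [Fintype I] [DecidableEq I] {A : Finset I} {fα fβ c δ : ℝ}

theorem betaShare_coreStar {i₀ b : I} (hi₀ : i₀ ∈ A) (hb : b ∉ A) :
    betaShare A (fTheta A fα fβ) c δ (coreStar A i₀) b = leafValue A fα fβ c δ := by
  have hsum : ∀ S : Finset I, b ∉ S → ∑ j ∈ S, pairValue (fTheta A fα fβ) c δ (coreStar A i₀) b j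
      = ∑ j ∈ S, pairBound (fTheta A fα fβ) c δ (coreStar A i₀) b j := fun S hbS =>
    sum_congr rfl fun j hj => pairValue_eq_pairBound_of_adj_or_dist_eq_two
      (coreStar_adj_or_dist_eq_two hi₀ fun h => hbS (h ▸ hj))
  have hkα : #{a ∈ A | (coreStar A i₀).Adj b a} = 1 := by
    rw [filter_congr fun a _ => coreStar_adj_of_notMem hi₀ hb, filter_eq', if_pos hi₀,
      card_singleton]
  have hkβ : #{b' ∈ Aᶜ.erase b | (coreStar A i₀).Adj b b'} = 0 := by
    refine card_eq_zero.2 (filter_eq_empty_iff.2 fun b' hb' hadj => ?_)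
    rw [coreStar_adj_of_notMem hi₀ hb] at hadj
    exact mem_compl.1 (mem_of_mem_erase hb') (hadj ▸ hi₀)
  rw [betaShare, ← sum_erase Aᶜ (pairValue_self _ c δ _ b), hsum A hb, hsum _ (notMem_erase b _),
    sum_pairBound fun a ha => fTheta_average_of_notMem_of_mem hb ha,
    sum_pairBound fun b' hb' => fTheta_average_of_notMem_of_notMem hb
      (mem_compl.1 (mem_of_mem_erase hb')),
    hkα, hkβ, cast_card_erase_of_mem (mem_compl.2 hb), leafValue]
  push_cast
  ring

theorem totalPayoff_coreStar {i₀ : I} (hi₀ : i₀ ∈ A) :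
    totalPayoff (fTheta A fα fβ) c δ (coreStar A i₀) = optimalValue A fα fβ c δ := by
  have hclique : (coreStar A i₀).IsClique A := fun a ha a' ha' hne => ⟨hne, Or.inl ⟨ha, ha'⟩⟩
  rw [totalPayoff_eq_add_sum_betaShare A,
    sum_congr rfl fun b hb => betaShare_coreStar hi₀ (mem_compl.1 hb),
    sum_sum_pairValue_of_isClique (fun a ha => fTheta_of_mem ha) hclique, sum_const, nsmul_eq_mul,
    optimalValue]

theorem totalPayoff_le_optimalValue (hfαβ : fβ < fα) (hfβ : 0 < fβ) (hδ0 : 0 < δ) (hδ1 : δ < 1)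
    (h1 : (1 - δ) * fα > c) (h2 : c > (1 - δ) * ((fα + fβ) / 2))
    (h3 : 0 < leafValue A fα fβ c δ) (g : SimpleGraph I) :
    totalPayoff (fTheta A fα fβ) c δ g ≤ optimalValue A fα fβ c δ := by
  have hfα : ∀ a ∈ A, fTheta A fα fβ a = fα := fun a ha => fTheta_of_mem ha
  have hblock := sum_sum_pairValue_le (c := c) (g := g) hfα (by linarith) hδ0.le hδ1.le
    (by linarith)
  have hshares := sum_le_sum fun b hb =>
    (betaShare_le_leafValue (g := g) (mem_compl.1 hb) hfαβ hfβ hδ0 hδ1 h1 h2 h3).1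
  rw [sum_const, nsmul_eq_mul] at hshares
  rw [totalPayoff_eq_add_sum_betaShare A, optimalValue]
  linarith

theorem exists_eq_coreStar_of_totalPayoff_eq (hB : Aᶜ.Nonempty) (hfαβ : fβ < fα) (hfβ : 0 < fβ)
    (hδ0 : 0 < δ) (hδ1 : δ < 1) (h1 : (1 - δ) * fα > c) (h2 : c > (1 - δ) * ((fα + fβ) / 2))
    (h3 : 0 < leafValue A fα fβ c δ) {g : SimpleGraph I}
    (h : totalPayoff (fTheta A fα fβ) c δ g = optimalValue A fα fβ c δ) :
    ∃ i₀ ∈ A, g = coreStar A i₀ := by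
  have hfα : ∀ a ∈ A, fTheta A fα fβ a = fα := fun a ha => fTheta_of_mem ha
  have hblock := sum_sum_pairValue_le (c := c) (g := g) hfα (by linarith) hδ0.le hδ1.le
    (by linarith)
  have hshare := fun b (hb : b ∈ Aᶜ) =>
    betaShare_le_leafValue (g := g) (mem_compl.1 hb) hfαβ hfβ hδ0 hδ1 h1 h2 h3
  have hshares := sum_le_sum fun b hb => (hshare b hb).1
  rw [sum_const, nsmul_eq_mul] at hshares
  rw [totalPayoff_eq_add_sum_betaShare A, optimalValue] at h
  have hshares_eq := (sum_eq_sum_iff_of_le fun b hb => (hshare b hb).1).1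
    (by rw [sum_const, nsmul_eq_mul]; linarith)
  have hleaf := fun b (hb : b ∉ A) =>
    (hshare b (mem_compl.2 hb)).2 (hshares_eq b (mem_compl.2 hb))
  have hclique : g.IsClique A :=
    isClique_of_sum_sum_pairValue_eq (c := c) hfα (by linarith) hδ0.le hδ1.le (by linarith)
      (by linarith)
  obtain ⟨b₀, hb₀⟩ := hB
  exact exists_eq_coreStar_of_isClique (mem_compl.1 hb₀) hclique
    (fun b hb => (hleaf b hb).1) (fun b hb => (hleaf b hb).2.1) fun b hb => (hleaf b hb).2.2

end Optimum

theorem thm2c_general {I : Type*} [Fintype I] [DecidableEq I]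
    (A : Finset I) (fα fβ c δ : ℝ)
    (hA : 1 ≤ A.card) (hB : 1 ≤ Aᶜ.card)
    (hfαβ : fβ < fα) (hfβ : 0 < fβ)
    (hδ0 : 0 < δ) (hδ1 : δ < 1)
    (h1 : (1 - δ) * fα > c) (h2 : c > (1 - δ) * ((fα + fβ) / 2))
    (h3 : (1 + δ * ((A.card : ℝ) - 1)) * fα + (1 + δ * ((A.card : ℝ) + (Aᶜ.card : ℝ) - 2)) * fβ > 2 * c) :
    ∀ g : SimpleGraph I,
      StronglyEfficient (fTheta A fα fβ) c δ g ↔ ∃ i₀ ∈ A, g = coreStar A i₀ := by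
  have hleaf : 0 < leafValue A fα fβ c δ := by
    rw [leafValue]
    linarith
  have hle := totalPayoff_le_optimalValue hfαβ hfβ hδ0 hδ1 h1 h2 hleaf
  intro g
  constructor
  · intro hg
    obtain ⟨a, ha⟩ := card_pos.1 hA
    exact exists_eq_coreStar_of_totalPayoff_eq (card_pos.1 hB) hfαβ hfβ hδ0 hδ1 h1 h2 hleaf
      ((hle g).antisymm (totalPayoff_coreStar ha ▸ hg (coreStar A a)))
  · rintro ⟨i₀, hi₀, rfl⟩ g'
    rw [totalPayoff_coreStar hi₀]
    exact hle g'

/-- Theorem 2(c): a network is strongly efficient iff it is the clique on the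
type-α agents together with links from a single type-α agent to every type-β agent. -/
theorem thm2c {I : Type*} [Fintype I] [DecidableEq I]
    (A : Finset I) (fα fβ c δ : ℝ)
    (hA : 1 ≤ A.card) (hB : 1 ≤ Aᶜ.card)
    (hfαβ : fβ < fα) (hfβ : 0 < fβ) (hc : 0 < c)
    (hδ0 : 0 < δ) (hδ1 : δ < 1)
    (h1 : (1 - δ) * fα > c) (h2 : c > (1 - δ) * ((fα + fβ) / 2))
    (h3 : (1 + δ * ((A.card : ℝ) - 1)) * fα + (1 + δ * ((A.card : ℝ) + (Aᶜ.card : ℝ) - 2)) * fβ > 2 * c) :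
    ∀ g : SimpleGraph I,
      StronglyEfficient (fTheta A fα fβ) c δ g ↔ ∃ i₀ ∈ A, g = coreStar A i₀ :=
  thm2c_general A fα fβ c δ hA hB hfαβ hfβ hδ0 hδ1 h1 h2 h3
end
end

section
/- Proposition 4(a): If (1−δ)·f_β > c, then the maximum over all networks g on I of u_i(g) equals (n_α−1)·f_α + n_β·f_β − (n_α+n_β−1)·c when i is a type-α agent, and equals n_α·f_α + (n_β−1)·f_β − (n_α+n_β−1)·c when i is a type-β agent; in both cases the maximum is attained (e.g. by the complete graph). -/
open Finset

noncomputable section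

open scoped Classical

variable {I : Type*}

/-
The payoff splits into one term per agent `j ≠ i`. A direct link to `j` is worth
`f j - c`; an indirect path at distance at least two is worth at most `δ f j`, which is
below `f j - c` because `c < (1 - δ) f j`; not reaching `j` is worth `0 ≤ f j - c`. Hence
every term is maximised by linking to everyone, and the complete graph is optimal.
-/

def netValue (f : I → ℝ) (c δ : ℝ) (g : SimpleGraph I) (i j : I) : ℝ :=
  (if g.Reachable i j then δ ^ (g.dist i j - 1) * f j else 0) - if g.Adj i j then c else 0

theorem netValue_top (f : I → ℝ) (c δ : ℝ) {i j : I} (hij : i ≠ j) :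
    netValue f c δ ⊤ i j = f j - c := by
  have hadj : (⊤ : SimpleGraph I).Adj i j := hij
  simp [netValue, hadj, hadj.reachable, SimpleGraph.dist_eq_one_iff_adj.mpr hadj]

theorem netValue_le {f : I → ℝ} {c δ : ℝ} (hδ0 : 0 ≤ δ) (hδ1 : δ ≤ 1) {j : I} (hfj : 0 ≤ f j)
    (hcf : c ≤ (1 - δ) * f j) (g : SimpleGraph I) {i : I} (hij : i ≠ j) :
    netValue f c δ g i j ≤ f j - c := by
  by_cases hadj : g.Adj i j
  · simp [netValue, hadj, hadj.reachable, SimpleGraph.dist_eq_one_iff_adj.mpr hadj]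
  by_cases hreach : g.Reachable i j
  · have hdist : 2 ≤ g.dist i j := by
      have h0 : g.dist i j ≠ 0 := fun h => hij (hreach.dist_eq_zero_iff.mp h)
      have h1 : g.dist i j ≠ 1 := fun h => hadj (SimpleGraph.dist_eq_one_iff_adj.mp h)
      omega
    have hpow : δ ^ (g.dist i j - 1) ≤ δ := pow_le_of_le_one hδ0 hδ1 (by omega)
    simp only [netValue, hreach, hadj, if_true, if_false, sub_zero]
    nlinarith
  · simp only [netValue, hreach, hadj, if_false, sub_zero]
    nlinarith

section Payoff

variable [Fintype I]

theorem payoff_eq_sum_netValue (f : I → ℝ) (c δ : ℝ) (g : SimpleGraph I) (i : I) :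
    payoff f c δ g i = ∑ j ∈ univ.erase i, netValue f c δ g i j := by
  have hcost : ((univ.filter fun j => g.Adj i j).card : ℝ) * c
      = ∑ j ∈ univ.erase i, if g.Adj i j then c else 0 := by
    rw [sum_ite, sum_const_zero, add_zero, sum_const, nsmul_eq_mul]
    congr 3
    ext j
    simpa using fun h : g.Adj i j => h.ne.symm
  have hbenefit : ∑ j ∈ univ.filter (fun j => j ≠ i ∧ g.Reachable i j), δ ^ (g.dist i j - 1) * f j
      = ∑ j ∈ univ.erase i, if g.Reachable i j then δ ^ (g.dist i j - 1) * f j else 0 := by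
    rw [← sum_filter]
    congr 1
    ext j
    simp
  rw [payoff, hcost, hbenefit, ← sum_sub_distrib]
  -- the two sides differ only in the `Decidable` instances of their `if`s
  exact sum_congr rfl fun j _ => by unfold netValue; congr

theorem payoff_top (f : I → ℝ) (c δ : ℝ) (i : I) :
    payoff f c δ ⊤ i = ∑ j, f j - f i - (Fintype.card I - 1) * c := by
  rw [payoff_eq_sum_netValue,
    sum_congr rfl fun j hj => netValue_top f c δ (ne_of_mem_erase hj).symm,
    sum_erase_eq_sub (mem_univ i), sum_sub_distrib, sum_const, card_univ, nsmul_eq_mul]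
  ring

theorem isGreatest_payoff_top {f : I → ℝ} {c δ : ℝ} (hδ0 : 0 ≤ δ) (hδ1 : δ ≤ 1)
    (hf : ∀ j, 0 ≤ f j) (hcf : ∀ j, c ≤ (1 - δ) * f j) (i : I) :
    IsGreatest (Set.range fun g : SimpleGraph I => payoff f c δ g i) (payoff f c δ ⊤ i) := by
  refine ⟨⟨⊤, rfl⟩, ?_⟩
  rintro _ ⟨g, rfl⟩
  simp only [payoff_eq_sum_netValue]
  refine sum_le_sum fun j hj => ?_
  have hij : i ≠ j := (ne_of_mem_erase hj).symm
  rw [netValue_top f c δ hij]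
  exact netValue_le hδ0 hδ1 (hf j) (hcf j) g hij

end Payoff

section TwoTypes

variable [DecidableEq I]

theorem le_fTheta {A : Finset I} {fα fβ : ℝ} (hfαβ : fβ ≤ fα) (j : I) :
    fβ ≤ fTheta A fα fβ j := by
  unfold fTheta
  split_ifs <;> linarith

theorem sum_fTheta [Fintype I] (A : Finset I) (fα fβ : ℝ) :
    ∑ j, fTheta A fα fβ j = A.card * fα + Aᶜ.card * fβ := by
  unfold fTheta
  rw [sum_ite, sum_const, sum_const, filter_mem_eq_inter, univ_inter,
    filter_not, filter_mem_eq_inter, univ_inter, ← compl_eq_univ_sdiff, nsmul_eq_mul,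
    nsmul_eq_mul]

end TwoTypes

theorem prop4a_general {I : Type*} [Fintype I] [DecidableEq I]
    (A : Finset I) (fα fβ c δ : ℝ)
    (hfαβ : fβ < fα) (hfβ : 0 < fβ)
    (hδ0 : 0 < δ) (hδ1 : δ < 1)
    (h : (1 - δ) * fβ > c) :
    (∀ i ∈ A, IsGreatest (Set.range fun g : SimpleGraph I => payoff (fTheta A fα fβ) c δ g i)
      (((A.card : ℝ) - 1) * fα + (Aᶜ.card : ℝ) * fβ - ((A.card : ℝ) + (Aᶜ.card : ℝ) - 1) * c)) ∧
    (∀ i ∉ A, IsGreatest (Set.range fun g : SimpleGraph I => payoff (fTheta A fα fβ) c δ g i)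
      ((A.card : ℝ) * fα + ((Aᶜ.card : ℝ) - 1) * fβ - ((A.card : ℝ) + (Aᶜ.card : ℝ) - 1) * c)) := by
  have hcard : (Fintype.card I : ℝ) = A.card + Aᶜ.card := by
    rw [← card_add_card_compl A, Nat.cast_add]
  have hmax : ∀ i, IsGreatest (Set.range fun g : SimpleGraph I => payoff (fTheta A fα fβ) c δ g i)
      ((A.card : ℝ) * fα + Aᶜ.card * fβ - fTheta A fα fβ i - (A.card + Aᶜ.card - 1) * c) := by
    intro i
    rw [← sum_fTheta, ← hcard, ← payoff_top]
    refine isGreatest_payoff_top hδ0.le hδ1.le (fun j => ?_) (fun j => ?_) i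
    · exact hfβ.le.trans (le_fTheta hfαβ.le j)
    · exact h.le.trans (mul_le_mul_of_nonneg_left (le_fTheta hfαβ.le j) (by linarith))
  constructor
  · intro i hi
    convert hmax i using 1
    rw [fTheta, if_pos hi]
    ring
  · intro i hi
    convert hmax i using 1
    rw [fTheta, if_neg hi]
    ring

/-- Proposition 4(a): if `(1−δ)·fβ > c`, the attained maximum one-period payoff
of an agent over all networks. -/
theorem prop4a {I : Type*} [Fintype I] [DecidableEq I]
    (A : Finset I) (fα fβ c δ : ℝ)
    (hA : 1 ≤ A.card) (hB : 1 ≤ Aᶜ.card)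
    (hfαβ : fβ < fα) (hfβ : 0 < fβ) (hc : 0 < c)
    (hδ0 : 0 < δ) (hδ1 : δ < 1)
    (h : (1 - δ) * fβ > c) :
    (∀ i ∈ A, IsGreatest (Set.range fun g : SimpleGraph I => payoff (fTheta A fα fβ) c δ g i)
      (((A.card : ℝ) - 1) * fα + (Aᶜ.card : ℝ) * fβ - ((A.card : ℝ) + (Aᶜ.card : ℝ) - 1) * c)) ∧
    (∀ i ∉ A, IsGreatest (Set.range fun g : SimpleGraph I => payoff (fTheta A fα fβ) c δ g i)
      ((A.card : ℝ) * fα + ((Aᶜ.card : ℝ) - 1) * fβ - ((A.card : ℝ) + (Aᶜ.card : ℝ) - 1) * c)) :=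
  prop4a_general A fα fβ c δ hfαβ hfβ hδ0 hδ1 h
end
end

section
/- Proposition 5(b): Suppose (1−δ)·(f_α+f_β)/2 > c > (1−δ)·f_β, and let g^e be the network whose edges are exactly the pairs {i,j} with at least one endpoint in A (the strongly efficient network of Theorem 2(b)). Then g^e is core-stable if and only if f_β ≥ c. -/
open Finset

noncomputable section

open scoped Classical

variable {I : Type*}

/-!
Split each payoff into the contributions `δ ^ (d(i,j) - 1) f(j) − [ij ∈ g] c` of the other agents.
Since `c < (1 - δ) fα`, an α-partner is worth at most `fα − c`, and only as a neighbour; since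
`c > (1 - δ) fβ`, a β-partner is worth at most `δ fβ`, and only at distance two. In `withCore A`
every β-agent attains both bounds, so no network makes a β-agent better off, and a β-agent who is
not worse off in a blocking network must still be linked to all of `A`. An α-agent in the
blocking coalition then keeps all its links to the β-agents of the coalition and reaches no other
β-agent, which does not help it when `fβ ≥ c`. When `fβ < c`, the α-agents gain by dropping
their links to the β-agents, i.e. by forming `cliqueOn A`.
-/

theorem SimpleGraph.Reachable.two_le_dist {g : SimpleGraph I} {i j : I} (hr : g.Reachable i j)
    (hij : i ≠ j) (hadj : ¬ g.Adj i j) : 2 ≤ g.dist i j := by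
  have h0 : g.dist i j ≠ 0 := fun h => hij (hr.dist_eq_zero_iff.mp h)
  have h1 : g.dist i j ≠ 1 := fun h => hadj (SimpleGraph.dist_eq_one_iff_adj.mp h)
  omega

theorem SimpleGraph.Reachable.mem_of_adj_mem {g : SimpleGraph I} {i j : I} {s : Finset I}
    (hs : ∀ a b, g.Adj a b → b ∈ s) (hr : g.Reachable i j) (hij : i ≠ j) : j ∈ s := by
  obtain ⟨w⟩ := hr.symm
  cases w with
  | nil => exact absurd rfl hij
  | cons h _ => exact hs _ _ h.symm

section Contribution

variable [Fintype I]

def contribution (f : I → ℝ) (c δ : ℝ) (g : SimpleGraph I) (i j : I) : ℝ :=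
  (if g.Reachable i j then δ ^ (g.dist i j - 1) * f j else 0) - if g.Adj i j then c else 0

theorem payoff_eq_sum_contribution (f : I → ℝ) (c δ : ℝ) (g : SimpleGraph I) (i : I) :
    payoff f c δ g i = ∑ j ∈ univ.erase i, contribution f c δ g i j := by
  have hreach : univ.filter (fun j => j ≠ i ∧ g.Reachable i j)
      = (univ.erase i).filter (g.Reachable i) := by
    ext j; simp [and_comm]
  have hadj : univ.filter (g.Adj i) = (univ.erase i).filter (g.Adj i) := by
    ext j; simpa using fun h : g.Adj i j => h.ne'
  simp only [payoff, contribution, sum_sub_distrib, ← sum_filter, hreach, hadj, sum_const,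
    nsmul_eq_mul]

variable {f : I → ℝ} {c δ : ℝ} {g : SimpleGraph I} {i j : I}

theorem contribution_of_adj (h : g.Adj i j) : contribution f c δ g i j = f j - c := by
  simp [contribution, h, h.reachable, SimpleGraph.dist_eq_one_iff_adj.mpr h]

theorem contribution_of_not_reachable (h : ¬ g.Reachable i j) : contribution f c δ g i j = 0 := by
  simp [contribution, h, show ¬ g.Adj i j from fun ha => h ha.reachable]

theorem contribution_le_of_not_adj (hij : i ≠ j) (hadj : ¬ g.Adj i j) (hδ0 : 0 ≤ δ)
    (hδ1 : δ ≤ 1) (hf : 0 ≤ f j) : contribution f c δ g i j ≤ δ * f j := by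
  by_cases hr : g.Reachable i j
  · have hpow : δ ^ (g.dist i j - 1) ≤ δ := by
      have := hr.two_le_dist hij hadj
      simpa using pow_le_pow_of_le_one hδ0 hδ1 (show 1 ≤ g.dist i j - 1 by omega)
    simpa [contribution, hr, hadj] using mul_le_mul_of_nonneg_right hpow hf
  · rw [contribution_of_not_reachable hr]
    positivity

theorem contribution_le_max (hij : i ≠ j) (hδ0 : 0 ≤ δ) (hδ1 : δ ≤ 1) (hf : 0 ≤ f j) :
    contribution f c δ g i j ≤ max (f j - c) (δ * f j) := by
  by_cases hadj : g.Adj i j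
  · exact (contribution_of_adj hadj).trans_le (le_max_left _ _)
  · exact (contribution_le_of_not_adj hij hadj hδ0 hδ1 hf).trans (le_max_right _ _)

theorem adj_of_sub_le_contribution (hij : i ≠ j) (hδ0 : 0 ≤ δ) (hδ1 : δ ≤ 1) (hf : 0 ≤ f j)
    (hc : c < (1 - δ) * f j) (h : f j - c ≤ contribution f c δ g i j) : g.Adj i j := by
  by_contra hadj
  have := contribution_le_of_not_adj (c := c) hij hadj hδ0 hδ1 hf
  linarith

end Contribution

section WithCore

variable [Fintype I] {A : Finset I} {f : I → ℝ} {c δ : ℝ} {i j : I}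

theorem contribution_withCore_of_mem (hi : i ∈ A) (hij : i ≠ j) :
    contribution f c δ (withCore A) i j = f j - c :=
  contribution_of_adj ⟨hij, Or.inl hi⟩

theorem contribution_withCore_of_not_mem (hA : A.Nonempty) (hi : i ∉ A) (hij : i ≠ j) :
    contribution f c δ (withCore A) i j = if j ∈ A then f j - c else δ * f j := by
  split_ifs with hj
  · exact contribution_of_adj ⟨hij, Or.inr hj⟩
  obtain ⟨a, ha⟩ := hA
  have hia : (withCore A).Adj i a := ⟨ne_of_mem_of_not_mem ha hi |>.symm, Or.inr ha⟩
  have haj : (withCore A).Adj a j := ⟨ne_of_mem_of_not_mem ha hj, Or.inl ha⟩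
  have hadj : ¬ (withCore A).Adj i j := fun h => h.2.elim hi hj
  have hr : (withCore A).Reachable i j := hia.reachable.trans haj.reachable
  have hdist : (withCore A).dist i j = 2 :=
    le_antisymm (by simpa using SimpleGraph.dist_le (hia.toWalk.append haj.toWalk))
      (hr.two_le_dist hij hadj)
  simp [contribution, hr, hadj, hdist]

theorem contribution_le_contribution_withCore_of_not_mem (g : SimpleGraph I) (hA : A.Nonempty)
    (hi : i ∉ A) (hij : i ≠ j) (hδ0 : 0 ≤ δ) (hδ1 : δ ≤ 1) (hf : 0 ≤ f j)
    (hα : j ∈ A → c ≤ (1 - δ) * f j) (hβ : j ∉ A → (1 - δ) * f j ≤ c) :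
    contribution f c δ g i j ≤ contribution f c δ (withCore A) i j := by
  refine (contribution_le_max hij hδ0 hδ1 hf).trans_eq ?_
  rw [contribution_withCore_of_not_mem hA hi hij]
  split_ifs with hjA
  · exact max_eq_left (by linarith [hα hjA])
  · exact max_eq_right (by linarith [hβ hjA])

theorem payoff_le_payoff_withCore_of_not_mem (g : SimpleGraph I) (hA : A.Nonempty) (hi : i ∉ A)
    (hδ0 : 0 ≤ δ) (hδ1 : δ ≤ 1) (hf : ∀ j, 0 ≤ f j) (hα : ∀ j ∈ A, c ≤ (1 - δ) * f j)
    (hβ : ∀ j ∉ A, (1 - δ) * f j ≤ c) :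
    payoff f c δ g i ≤ payoff f c δ (withCore A) i := by
  simp only [payoff_eq_sum_contribution]
  exact sum_le_sum fun j hj => contribution_le_contribution_withCore_of_not_mem g hA hi
    (ne_of_mem_erase hj).symm hδ0 hδ1 (hf j) (hα j) (hβ j)

theorem adj_of_payoff_withCore_le_payoff {g : SimpleGraph I} (hA : A.Nonempty) (hi : i ∉ A)
    (hδ0 : 0 ≤ δ) (hδ1 : δ ≤ 1) (hf : ∀ j, 0 ≤ f j) (hα : ∀ j ∈ A, c < (1 - δ) * f j)
    (hβ : ∀ j ∉ A, (1 - δ) * f j ≤ c) (h : payoff f c δ (withCore A) i ≤ payoff f c δ g i)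
    (hj : j ∈ A) : g.Adj i j := by
  have hij : i ≠ j := (ne_of_mem_of_not_mem hj hi).symm
  have hle (k) (hk : k ∈ univ.erase i) :
      contribution f c δ g i k ≤ contribution f c δ (withCore A) i k :=
    contribution_le_contribution_withCore_of_not_mem g hA hi (ne_of_mem_erase hk).symm hδ0 hδ1
      (hf k) (fun hk => (hα k hk).le) (hβ k)
  rw [payoff_eq_sum_contribution, payoff_eq_sum_contribution] at h
  have heq := (sum_eq_sum_iff_of_le hle).mp (le_antisymm (sum_le_sum hle) h) j
    (mem_erase.mpr ⟨hij.symm, mem_univ j⟩)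
  refine adj_of_sub_le_contribution hij hδ0 hδ1 (hf j) (hα j hj) ?_
  rw [heq, contribution_withCore_of_not_mem hA hi hij, if_pos hj]

theorem payoff_le_payoff_withCore_of_mem {s : Finset I} {g : SimpleGraph I}
    (hs : ∀ a b, g.Adj a b → b ∈ s) (hi : i ∈ A) (hδ0 : 0 ≤ δ) (hδ1 : δ ≤ 1) (hf : ∀ j, 0 ≤ f j)
    (hα : ∀ j ∈ A, c ≤ (1 - δ) * f j) (hβ : ∀ j ∉ A, c ≤ f j)
    (hlinked : ∀ j ∉ A, j ∈ s → g.Adj i j) :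
    payoff f c δ g i ≤ payoff f c δ (withCore A) i := by
  simp only [payoff_eq_sum_contribution]
  refine sum_le_sum fun j hj => ?_
  have hij := (ne_of_mem_erase hj).symm
  rw [contribution_withCore_of_mem hi hij]
  by_cases hjA : j ∈ A
  · exact (contribution_le_max hij hδ0 hδ1 (hf j)).trans_eq
      (max_eq_left (by linarith [hα j hjA]))
  by_cases hjs : j ∈ s
  · exact (contribution_of_adj (hlinked j hjA hjs)).le
  · have hr : ¬ g.Reachable i j := fun hr => hjs (hr.mem_of_adj_mem hs hij)
    rw [contribution_of_not_reachable hr]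
    linarith [hβ j hjA]

theorem payoff_withCore_lt_payoff_cliqueOn {b : I} (hi : i ∈ A) (hb : b ∉ A)
    (hβ : ∀ j ∉ A, f j < c) :
    payoff f c δ (withCore A) i < payoff f c δ (cliqueOn A) i := by
  simp only [payoff_eq_sum_contribution]
  have hsame (j) (hij : i ≠ j) (hj : j ∈ A) :
      contribution f c δ (withCore A) i j = contribution f c δ (cliqueOn A) i j := by
    rw [contribution_withCore_of_mem hi hij, contribution_of_adj (g := cliqueOn A) ⟨hij, hi, hj⟩]
  have hgain (j) (hij : i ≠ j) (hj : j ∉ A) :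
      contribution f c δ (withCore A) i j < contribution f c δ (cliqueOn A) i j := by
    have hr : ¬ (cliqueOn A).Reachable i j :=
      fun hr => hj (hr.mem_of_adj_mem (fun _ _ (h : (cliqueOn A).Adj _ _) => h.2.2) hij)
    rw [contribution_withCore_of_mem hi hij, contribution_of_not_reachable hr]
    linarith [hβ j hj]
  have hib : i ≠ b := ne_of_mem_of_not_mem hi hb
  refine sum_lt_sum (fun j hj => ?_) ⟨b, mem_erase.mpr ⟨hib.symm, mem_univ b⟩, hgain b hib hb⟩
  have hij := (ne_of_mem_erase hj).symm
  by_cases hjA : j ∈ A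
  · exact (hsame j hij hjA).le
  · exact (hgain j hij hjA).le

end WithCore

theorem prop5b_general {I : Type*} [Fintype I] [DecidableEq I]
    (A : Finset I) (fα fβ c δ : ℝ)
    (hA : 1 ≤ A.card) (hB : 1 ≤ Aᶜ.card)
    (hfαβ : fβ < fα) (hfβ : 0 < fβ)
    (hδ0 : 0 < δ) (hδ1 : δ < 1)
    (h1 : (1 - δ) * ((fα + fβ) / 2) > c) (h2 : c > (1 - δ) * fβ) :
    CoreStable (fTheta A fα fβ) c δ (withCore A) ↔ fβ ≥ c := by
  have hA : A.Nonempty := card_pos.mp hA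
  obtain ⟨b, hb⟩ := card_pos.mp hB
  have hfA (j) (hj : j ∈ A) : fTheta A fα fβ j = fα := if_pos hj
  have hfB (j) (hj : j ∉ A) : fTheta A fα fβ j = fβ := if_neg hj
  have hf (j) : 0 ≤ fTheta A fα fβ j := by
    unfold fTheta; split_ifs <;> linarith
  have hα (j) (hj : j ∈ A) : c < (1 - δ) * fTheta A fα fβ j := by
    rw [hfA j hj]; nlinarith
  have hβ (j) (hj : j ∉ A) : (1 - δ) * fTheta A fα fβ j ≤ c := by
    rw [hfB j hj]; exact h2.le
  constructor
  · intro hstable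
    by_contra! hlt
    have hgain (i) (hi : i ∈ A) := payoff_withCore_lt_payoff_cliqueOn (δ := δ) hi
      (mem_compl.mp hb) fun j hj => (hfB j hj).trans_lt hlt
    obtain ⟨a, ha⟩ := hA
    exact hstable ⟨A, cliqueOn A, fun _ _ h => h.2, fun i hi => (hgain i hi).le, a, ha, hgain a ha⟩
  · rintro hβc ⟨s, g, hs, hweak, w, -, hstrict⟩
    have hwA : w ∈ A := by
      by_contra hwA
      exact (payoff_le_payoff_withCore_of_not_mem g hA hwA hδ0.le hδ1.le hf
        (fun j hj => (hα j hj).le) hβ).not_gt hstrict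
    have hlinked (j) (hj : j ∉ A) (hjs : j ∈ s) : g.Adj w j :=
      (adj_of_payoff_withCore_le_payoff hA hj hδ0.le hδ1.le hf hα hβ (hweak j hjs) hwA).symm
    exact (payoff_le_payoff_withCore_of_mem (fun a b h => (hs a b h).2) hwA hδ0.le hδ1.le hf
      (fun j hj => (hα j hj).le) (fun j hj => (hfB j hj).symm ▸ hβc) hlinked).not_gt hstrict

/-- Proposition 5(b): under the conditions of Theorem 2(b), the strongly
efficient network is core-stable iff `fβ ≥ c`. -/
theorem prop5b {I : Type*} [Fintype I] [DecidableEq I]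
    (A : Finset I) (fα fβ c δ : ℝ)
    (hA : 1 ≤ A.card) (hB : 1 ≤ Aᶜ.card)
    (hfαβ : fβ < fα) (hfβ : 0 < fβ) (hc : 0 < c)
    (hδ0 : 0 < δ) (hδ1 : δ < 1)
    (h1 : (1 - δ) * ((fα + fβ) / 2) > c) (h2 : c > (1 - δ) * fβ) :
    CoreStable (fTheta A fα fβ) c δ (withCore A) ↔ fβ ≥ c :=
  prop5b_general A fα fβ c δ hA hB hfαβ hfβ hδ0 hδ1 h1 h2
end
end

section
/- Proposition 5(f): Suppose n_α ≥ 2, (1−δ)·f_α < c, and (1+δ(n_α−1))·f_α + (1+δ(n_α+n_β−2))·f_β < 2c < f_α·(2+δ(n_α−2)), and let g^e be the star on the type-α agents centered at a fixed type-α agent i₀ ∈ A, i.e. with edge set {{i₀, j} : j ∈ A, j ≠ i₀} (the strongly efficient network of Theorem 2(f)). Then g^e is core-stable if and only if f_α ≥ c. -/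
/-!
If `fα < c`, the centre `i₀` gains by deleting all its links. Conversely, let `fα ≥ c` and let
`C` be a component of a blocking network. Every member of `C` receives at most `δ f_j` from each
other member `j` of `C`, plus the surplus `(1 - δ) f_j - c ≤ 0` from each neighbour `j`. As the
surpluses are nonpositive, keeping only the edges of a breadth-first spanning tree of `C` does not
decrease the bound, and each non-root vertex `v` then contributes at most
`(1 - δ) (f_v + fα) - 2c`. Rooted at a type-α agent when `C` has one, this bound is at most the
total payoff of `C` in the star, by `(1 - δ) fα < c` and the upper bound on `2c`; so the members
of `C` cannot all weakly gain with one gaining strictly.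
-/

open Finset

noncomputable section

open scoped Classical

variable {I : Type*}

open SimpleGraph

lemma SimpleGraph.Reachable.exists_adj_dist_lt {g : SimpleGraph I} {v r : I}
    (h : g.Reachable v r) (hne : v ≠ r) : ∃ u, g.Adj v u ∧ g.dist u r < g.dist v r := by
  obtain ⟨w, hw⟩ := h.exists_walk_length_eq_dist
  cases w with
  | nil => exact absurd rfl hne
  | cons hadj q =>
    rw [Walk.length_cons] at hw
    exact ⟨_, hadj, by have := dist_le q; omega⟩

lemma payoff_eq_of_mem_iff [Fintype I] {f : I → ℝ} {c δ : ℝ} {g : SimpleGraph I} {i : I}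
    {R N : Finset I} (hR : ∀ j, j ∈ R ↔ j ≠ i ∧ g.Reachable i j) (hN : ∀ j, j ∈ N ↔ g.Adj i j) :
    payoff f c δ g i = ∑ j ∈ R, δ ^ (g.dist i j - 1) * f j - #N * c := by
  rw [payoff]
  congr <;> ext j <;> simp [hR, hN]

lemma payoff_bot [Fintype I] (f : I → ℝ) (c δ : ℝ) (i : I) : payoff f c δ ⊥ i = 0 := by
  rw [payoff_eq_of_mem_iff (R := ∅) (N := ∅)] <;> simp [reachable_bot, eq_comm]

/-- The pairs `(v, p v)` and `(p u, u)` never coincide because `p` strictly decreases the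
distance to `r`. -/
lemma sum_adj_le_sum_parent [DecidableEq I] {g : SimpleGraph I} (w : I → I → ℝ)
    (hw : ∀ i j, g.Adj i j → w i j ≤ 0) {C : Finset I} {r : I} (p : I → I)
    (hpC : ∀ v ∈ C.erase r, p v ∈ C)
    (hp : ∀ v ∈ C.erase r, g.Adj v (p v) ∧ g.dist (p v) r < g.dist v r) :
    ∑ i ∈ C, ∑ j ∈ C, (if g.Adj i j then w i j else 0)
      ≤ ∑ v ∈ C.erase r, (w v (p v) + w (p v) v) := by
  set up := (C.erase r).image fun v => (v, p v)
  set down := (C.erase r).image fun v => (p v, v)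
  have hsub : up ∪ down ⊆ (C ×ˢ C).filter fun q => g.Adj q.1 q.2 := by
    intro q hq
    rcases mem_union.1 hq with hq | hq <;> obtain ⟨v, hv, rfl⟩ := mem_image.1 hq <;>
      simp [(hp v hv).1, (hp v hv).1.symm, mem_of_mem_erase hv, hpC v hv]
  have hdisj : Disjoint up down := by
    refine disjoint_left.2 fun q hqu hqd => ?_
    obtain ⟨v, hv, rfl⟩ := mem_image.1 hqu
    obtain ⟨u, hu, huv⟩ := mem_image.1 hqd
    obtain ⟨hpu, rfl⟩ := Prod.mk.inj huv
    have := (hp v hv).2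
    have := (hp _ hu).2
    rw [hpu] at this
    omega
  calc ∑ i ∈ C, ∑ j ∈ C, (if g.Adj i j then w i j else 0)
      = ∑ q ∈ (C ×ˢ C).filter fun q => g.Adj q.1 q.2, w q.1 q.2 := by
        rw [sum_filter, sum_product]
    _ ≤ ∑ q ∈ up ∪ down, w q.1 q.2 :=
        sum_le_sum_of_subset_of_nonpos' hsub fun q hq _ => hw _ _ (mem_filter.1 hq).2
    _ = ∑ v ∈ C.erase r, (w v (p v) + w (p v) v) := by
        rw [sum_union hdisj, sum_image, sum_image, sum_add_distrib]
        · exact fun u _ v _ h => (Prod.ext_iff.1 h).2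
        · exact fun u _ v _ h => (Prod.ext_iff.1 h).1

lemma pow_dist_sub_one_mul_le {g : SimpleGraph I} {δ : ℝ} (hδ0 : 0 ≤ δ) (hδ1 : δ ≤ 1)
    {x : ℝ} (hx : 0 ≤ x) {i j : I} (hij : g.Reachable i j) (hne : i ≠ j) :
    δ ^ (g.dist i j - 1) * x ≤ δ * x + if g.Adj i j then (1 - δ) * x else 0 := by
  by_cases hadj : g.Adj i j
  · simp only [hadj, dist_eq_one_iff_adj.2 hadj, if_true, Nat.sub_self, pow_zero]
    linarith
  · have h2 := hij.one_lt_dist_of_ne_of_not_adj hne hadj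
    simpa [hadj] using mul_le_mul_of_nonneg_right (pow_le_of_le_one hδ0 hδ1 (by omega)) hx

section Component

variable [Fintype I] {g : SimpleGraph I} {f : I → ℝ} {c δ : ℝ}

lemma payoff_le_of_component (hf : ∀ j, 0 ≤ f j) (hδ0 : 0 ≤ δ) (hδ1 : δ ≤ 1)
    {C : Finset I} {i : I} (hC : ∀ j, j ∈ C ↔ g.Reachable i j) :
    payoff f c δ g i ≤ δ * (∑ j ∈ C, f j - f i)
      + ∑ j ∈ C, if g.Adj i j then (1 - δ) * f j - c else 0 := by
  have hi : i ∈ C := (hC i).2 .rfl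
  have hreach : (univ.filter fun j => j ≠ i ∧ g.Reachable i j) = C.erase i := by
    ext j; simp [hC]
  have hadj : (univ.filter fun j => g.Adj i j) = (C.erase i).filter fun j => g.Adj i j := by
    ext j
    simp only [mem_filter, mem_univ, true_and, mem_erase, hC]
    exact ⟨fun h => ⟨⟨h.ne.symm, h.reachable⟩, h⟩, fun h => h.2⟩
  rw [← sum_erase_eq_sub hi,
    ← sum_erase C (f := fun j => if g.Adj i j then (1 - δ) * f j - c else 0) (a := i) (by simp),
    payoff, hreach, hadj, card_filter, Nat.cast_sum, sum_mul, mul_sum, ← sum_add_distrib,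
    ← sum_sub_distrib]
  refine sum_le_sum fun j hj => ?_
  have hj := mem_erase.1 hj
  have := pow_dist_sub_one_mul_le hδ0 hδ1 (hf j) ((hC j).1 hj.2) hj.1.symm
  split_ifs at this ⊢ <;> push_cast <;> linarith

lemma sum_payoff_le_of_component [DecidableEq I] (hf : ∀ j, 0 ≤ f j) {M : ℝ}
    (hfM : ∀ j, f j ≤ M) (hδ0 : 0 ≤ δ) (hδ1 : δ ≤ 1) (hMc : (1 - δ) * M ≤ c)
    {C : Finset I} {r : I} (hC : ∀ j, j ∈ C ↔ g.Reachable r j) :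
    ∑ i ∈ C, payoff f c δ g i
      ≤ δ * (#C - 1) * ∑ j ∈ C, f j + ∑ v ∈ C.erase r, ((1 - δ) * (f v + M) - 2 * c) := by
  have hCi : ∀ i ∈ C, ∀ j, j ∈ C ↔ g.Reachable i j := fun i hi j =>
    (hC j).trans ⟨((hC i).1 hi).symm.trans, ((hC i).1 hi).trans⟩
  choose! p hp using fun v (hv : v ∈ C.erase r) =>
    ((hC v).1 (mem_of_mem_erase hv)).symm.exists_adj_dist_lt (ne_of_mem_erase hv)
  have hpC : ∀ v ∈ C.erase r, p v ∈ C := fun v hv =>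
    (hCi v (mem_of_mem_erase hv) _).2 (hp v hv).1.reachable
  have hw : ∀ i j, g.Adj i j → (1 - δ) * f j - c ≤ 0 := fun _ j _ => by nlinarith [hfM j]
  calc ∑ i ∈ C, payoff f c δ g i
      ≤ ∑ i ∈ C, (δ * (∑ j ∈ C, f j - f i)
          + ∑ j ∈ C, if g.Adj i j then (1 - δ) * f j - c else 0) :=
        sum_le_sum fun i hi => payoff_le_of_component hf hδ0 hδ1 (hCi i hi)
    _ ≤ δ * (#C - 1) * ∑ j ∈ C, f j
          + ∑ v ∈ C.erase r, ((1 - δ) * f (p v) - c + ((1 - δ) * f v - c)) := by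
        rw [sum_add_distrib, ← mul_sum, sum_sub_distrib, sum_const, nsmul_eq_mul]
        exact add_le_add (le_of_eq (by ring))
          (sum_adj_le_sum_parent (fun _ j => (1 - δ) * f j - c) hw p hpC hp)
    _ ≤ _ := by gcongr with v; nlinarith [hfM (p v)]

end Component

lemma mem_of_reachable_starOn {A : Finset I} {i₀ i j : I} (h : (starOn A i₀).Reachable i j)
    (hne : i ≠ j) : i ∈ A := by
  obtain ⟨_, hadj, -⟩ := h.exists_adj_dist_lt hne
  exact hadj.2.2.1

lemma reachable_starOn {A : Finset I} {i₀ : I} (hi₀ : i₀ ∈ A) {i j : I} (hi : i ∈ A) (hj : j ∈ A) :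
    (starOn A i₀).Reachable i j := by
  have toCenter : ∀ k ∈ A, (starOn A i₀).Reachable k i₀ := fun k hk => by
    by_cases hk₀ : k = i₀
    · exact hk₀ ▸ .rfl
    · exact Adj.reachable ⟨hk₀, Or.inr rfl, hk, hi₀⟩
  exact (toCenter i hi).trans (toCenter j hj).symm

lemma mem_erase_iff_reachable_starOn [DecidableEq I] {A : Finset I} {i₀ : I} (hi₀ : i₀ ∈ A)
    {i : I} (hi : i ∈ A) (j : I) :
    j ∈ A.erase i ↔ j ≠ i ∧ (starOn A i₀).Reachable i j := by
  rw [mem_erase]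
  exact and_congr_right fun hj =>
    ⟨reachable_starOn hi₀ hi, fun h => mem_of_reachable_starOn h.symm hj⟩

section Star

variable [Fintype I] [DecidableEq I] {A : Finset I} {i₀ : I} {fα fβ c δ : ℝ}

lemma payoff_starOn_of_notMem {i : I} (hi : i ∉ A) :
    payoff (fTheta A fα fβ) c δ (starOn A i₀) i = 0 := by
  rw [payoff_eq_of_mem_iff (R := ∅) (N := ∅)]
  · simp
  · exact fun j => iff_of_false (notMem_empty j)
      fun h => hi (mem_of_reachable_starOn h.2 h.1.symm)
  · exact fun j => iff_of_false (notMem_empty j) fun h => hi h.2.2.1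

lemma payoff_starOn_center (hi₀ : i₀ ∈ A) :
    payoff (fTheta A fα fβ) c δ (starOn A i₀) i₀ = (#A - 1) * (fα - c) := by
  have hadj : ∀ j, j ∈ A.erase i₀ ↔ (starOn A i₀).Adj i₀ j := fun j => by
    simp [starOn, eq_comm, hi₀]
  rw [payoff_eq_of_mem_iff (mem_erase_iff_reachable_starOn hi₀ hi₀) hadj,
    sum_congr rfl fun j hj => by
      rw [dist_eq_one_iff_adj.2 ((hadj j).1 hj), fTheta, if_pos (mem_of_mem_erase hj)],
    sum_const, card_erase_of_mem hi₀, nsmul_eq_mul, Nat.cast_pred (card_pos.2 ⟨i₀, hi₀⟩)]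
  simp only [Nat.sub_self, pow_zero, one_mul]
  ring

lemma payoff_starOn_leaf (hi₀ : i₀ ∈ A) {i : I} (hi : i ∈ A) (hne : i ≠ i₀) :
    payoff (fTheta A fα fβ) c δ (starOn A i₀) i = fα - c + δ * (#A - 2) * fα := by
  have hadj : ∀ j, j ∈ ({i₀} : Finset I) ↔ (starOn A i₀).Adj i j := fun j => by
    simp only [mem_singleton, starOn]
    constructor
    · rintro rfl; exact ⟨hne, Or.inr rfl, hi, hi₀⟩
    · rintro ⟨-, h | h, -⟩
      exacts [absurd h hne, h]
  have hi₀' : i₀ ∈ A.erase i := mem_erase.2 ⟨hne.symm, hi₀⟩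
  have hleaf : ∀ j ∈ (A.erase i).erase i₀,
      δ ^ ((starOn A i₀).dist i j - 1) * fTheta A fα fβ j = δ * fα := fun j hj => by
    obtain ⟨hji₀, hji, hj⟩ : j ≠ i₀ ∧ j ≠ i ∧ j ∈ A := by simpa using hj
    have hdist : (starOn A i₀).dist i j = 2 := by
      have hle : (starOn A i₀).dist i j ≤ 2 := (dist_le <|
        .cons (⟨hne, Or.inr rfl, hi, hi₀⟩ : (starOn A i₀).Adj i i₀) <|
        .cons (⟨hji₀.symm, Or.inl rfl, hi₀, hj⟩ : (starOn A i₀).Adj i₀ j) .nil).trans_eq rfl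
      have hlt := (reachable_starOn hi₀ hi hj).one_lt_dist_of_ne_of_not_adj hji.symm
        fun h => h.2.1.elim hne hji₀
      omega
    rw [hdist, fTheta, if_pos hj, pow_one]
  have hcard : (#((A.erase i).erase i₀) : ℝ) = #A - 2 := by
    have h₁ := card_erase_add_one hi₀'
    have h₂ := card_erase_add_one hi
    have : (#((A.erase i).erase i₀) : ℝ) + 1 + 1 = #A := by exact_mod_cast h₁ ▸ h₂
    linarith
  rw [payoff_eq_of_mem_iff (mem_erase_iff_reachable_starOn hi₀ hi) hadj, ← add_sum_erase _ _ hi₀',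
    sum_congr rfl hleaf, sum_const, nsmul_eq_mul, hcard,
    dist_eq_one_iff_adj.2 ((hadj i₀).1 (mem_singleton_self i₀)), fTheta, if_pos hi₀]
  simp only [Nat.sub_self, pow_zero, one_mul, card_singleton, Nat.cast_one]
  ring

/-- All leaves get at least as much as the centre because `(1 - δ) fα ≤ c`. -/
lemma sum_payoff_starOn_ge (hi₀ : i₀ ∈ A) (hA2 : 2 ≤ #A) (h1 : (1 - δ) * fα ≤ c)
    {s : Finset I} (hsA : s ⊆ A) (hs : s.Nonempty) :
    (#A - 1) * (fα - c) + (#s - 1) * (fα - c + δ * (#A - 2) * fα)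
      ≤ ∑ i ∈ s, payoff (fTheta A fα fβ) c δ (starOn A i₀) i := by
  have hleaf : ∀ i ∈ s.erase i₀,
      payoff (fTheta A fα fβ) c δ (starOn A i₀) i = fα - c + δ * (#A - 2) * fα :=
    fun i hi => payoff_starOn_leaf hi₀ (hsA (mem_of_mem_erase hi)) (ne_of_mem_erase hi)
  by_cases hi₀s : i₀ ∈ s
  · rw [← add_sum_erase _ _ hi₀s, payoff_starOn_center hi₀, sum_congr rfl hleaf, sum_const,
      card_erase_of_mem hi₀s, nsmul_eq_mul, Nat.cast_pred hs.card_pos]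
  · rw [erase_eq_of_notMem hi₀s] at hleaf
    rw [sum_congr rfl hleaf, sum_const, nsmul_eq_mul]
    have hA2' : (2 : ℝ) ≤ #A := by exact_mod_cast hA2
    nlinarith [mul_nonneg (sub_nonneg.2 hA2') (sub_nonneg.2 h1)]

end Star

lemma sum_comp_fTheta [DecidableEq I] (A s : Finset I) (fα fβ : ℝ) (h : ℝ → ℝ) :
    ∑ v ∈ s, h (fTheta A fα fβ v) = #(s.filter (· ∈ A)) * h fα + #(s.filter (· ∉ A)) * h fβ := by
  simp only [fTheta, apply_ite h, sum_ite, sum_const, nsmul_eq_mul]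

lemma tree_bound_le_starOn_value {fα fβ c δ nα nβ a b : ℝ} (hδ0 : 0 ≤ δ) (hfβ : 0 ≤ fβ)
    (hfc : c ≤ fα) (hfα : 0 ≤ fα)
    (h2 : (1 + δ * (nα - 1)) * fα + (1 + δ * (nα + nβ - 2)) * fβ < 2 * c)
    (ha1 : 1 ≤ a) (ha : a ≤ nα) (hb0 : 0 ≤ b) (hb : b ≤ nβ) :
    δ * (a + b - 1) * (a * fα + b * fβ) + (a - 1) * ((1 - δ) * (fα + fα) - 2 * c)
        + b * ((1 - δ) * (fβ + fα) - 2 * c)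
      ≤ (nα - 1) * (fα - c) + (a - 1) * (fα - c + δ * (nα - 2) * fα) := by
  have hβ : (1 + δ * (a - 1)) * fα + (1 + δ * (a + b - 2)) * fβ ≤ 2 * c := by
    nlinarith [mul_nonneg (mul_nonneg hδ0 (sub_nonneg.2 ha)) hfα,
      mul_nonneg (mul_nonneg hδ0 (by linarith : (0 : ℝ) ≤ nα + nβ - (a + b))) hfβ]
  nlinarith [mul_nonneg hb0 (sub_nonneg.2 hβ), mul_nonneg (sub_nonneg.2 ha) (sub_nonneg.2 hfc),
    mul_nonneg (sub_nonneg.2 ha1) (mul_nonneg hδ0 (mul_nonneg (sub_nonneg.2 ha) hfα))]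

lemma tree_bound_nonpos {fα fβ c δ nα nβ b : ℝ} (hδ0 : 0 ≤ δ) (hfβ : 0 ≤ fβ) (hfα : 0 ≤ fα)
    (h2 : (1 + δ * (nα - 1)) * fα + (1 + δ * (nα + nβ - 2)) * fβ < 2 * c)
    (hnα : 1 ≤ nα) (hb1 : 1 ≤ b) (hb : b ≤ nβ) :
    δ * (b - 1) * (b * fβ) + (b - 1) * ((1 - δ) * (fβ + fα) - 2 * c) ≤ 0 := by
  have hβ : δ * b * fβ + (1 - δ) * (fα + fβ) - 2 * c ≤ 0 := by
    nlinarith [mul_nonneg (mul_nonneg hδ0 (sub_nonneg.2 hnα)) hfα,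
      mul_nonneg (mul_nonneg hδ0 (by linarith : (0 : ℝ) ≤ nα + nβ - 1 - b)) hfβ]
  nlinarith [mul_nonneg (sub_nonneg.2 hb1) (neg_nonneg.2 hβ)]

section CoreStability

variable [Fintype I] [DecidableEq I] {A : Finset I} {i₀ : I} {fα fβ c δ : ℝ}

/-- The spanning tree is rooted at a type-α agent whenever the component has one. -/
lemma sum_payoff_component_le_starOn (hi₀ : i₀ ∈ A) (hA2 : 2 ≤ #A) (hfβ : 0 ≤ fβ)
    (hfαβ : fβ ≤ fα) (hfc : c ≤ fα) (hδ0 : 0 ≤ δ) (hδ1 : δ ≤ 1) (h1 : (1 - δ) * fα ≤ c)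
    (h2 : (1 + δ * (#A - 1)) * fα + (1 + δ * (#A + #Aᶜ - 2)) * fβ < 2 * c)
    {g : SimpleGraph I} {C : Finset I} {i : I} (hC : ∀ j, j ∈ C ↔ g.Reachable i j) :
    ∑ j ∈ C, payoff (fTheta A fα fβ) c δ g j
      ≤ ∑ j ∈ C, payoff (fTheta A fα fβ) c δ (starOn A i₀) j := by
  have hfα : 0 ≤ fα := hfβ.trans hfαβ
  have hf0 : ∀ j, 0 ≤ fTheta A fα fβ j := fun j => by unfold fTheta; split_ifs <;> assumption
  have hfM : ∀ j, fTheta A fα fβ j ≤ fα := fun j => by unfold fTheta; split_ifs <;> linarith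
  obtain ⟨r, hrC, hr⟩ : ∃ r ∈ C, r ∈ A ∨ ∀ j ∈ C, j ∉ A := by
    by_cases hα : ∃ r ∈ C, r ∈ A
    · obtain ⟨r, hrC, hrA⟩ := hα
      exact ⟨r, hrC, .inl hrA⟩
    · exact ⟨i, (hC i).2 .rfl, .inr fun j hj hjA => hα ⟨j, hj, hjA⟩⟩
  have hCr : ∀ j, j ∈ C ↔ g.Reachable r j := fun j =>
    (hC j).trans ⟨((hC r).1 hrC).symm.trans, ((hC r).1 hrC).trans⟩
  have hupper := sum_payoff_le_of_component hf0 hfM hδ0 hδ1 h1 hCr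
  have hcard : (#C : ℝ) = #(C.filter (· ∈ A)) + #(C.filter (· ∉ A)) := by
    exact_mod_cast (card_filter_add_card_filter_not _).symm
  have hS : ∑ j ∈ C, fTheta A fα fβ j = #(C.filter (· ∈ A)) * fα + #(C.filter (· ∉ A)) * fβ :=
    sum_comp_fTheta A C fα fβ id
  rw [sum_erase_eq_sub hrC, sum_comp_fTheta A C fα fβ (fun x => (1 - δ) * (x + fα) - 2 * c),
    hS, hcard, fTheta] at hupper
  have hb : (#(C.filter (· ∉ A)) : ℝ) ≤ #Aᶜ := by
    exact_mod_cast card_le_card fun j hj => mem_compl.2 (mem_filter.1 hj).2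
  have hstar : ∑ j ∈ C.filter (· ∈ A), payoff (fTheta A fα fβ) c δ (starOn A i₀) j
      = ∑ j ∈ C, payoff (fTheta A fα fβ) c δ (starOn A i₀) j :=
    sum_filter_of_ne fun j _ hj => by_contra fun hjA => hj (payoff_starOn_of_notMem hjA)
  rcases hr with hrA | hnoA
  · have hαC : (C.filter (· ∈ A)).Nonempty := ⟨r, mem_filter.2 ⟨hrC, hrA⟩⟩
    have hlower := sum_payoff_starOn_ge (fβ := fβ) hi₀ hA2 h1 (fun j hj => (mem_filter.1 hj).2) hαC
    have ha : (#(C.filter (· ∈ A)) : ℝ) ≤ #A := by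
      exact_mod_cast card_le_card fun j hj => (mem_filter.1 hj).2
    have := tree_bound_le_starOn_value hδ0 hfβ hfc hfα h2
      (by exact_mod_cast hαC.card_pos) ha (by positivity) hb
    rw [if_pos hrA] at hupper
    linarith
  · rw [filter_eq_empty_iff.2 hnoA, if_neg (hnoA r hrC)] at hupper
    rw [← hstar, filter_eq_empty_iff.2 hnoA, sum_empty]
    have hb1 : (1 : ℝ) ≤ #(C.filter (· ∉ A)) := by
      exact_mod_cast card_pos.2 ⟨r, mem_filter.2 ⟨hrC, hnoA r hrC⟩⟩
    have hA1 : (1 : ℝ) ≤ #A := by exact_mod_cast card_pos.2 ⟨i₀, hi₀⟩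
    have := tree_bound_nonpos hδ0 hfβ hfα h2 hA1 hb1 hb
    simp only [card_empty, Nat.cast_zero] at hupper
    linarith

end CoreStability

lemma coreStable_starOn [Fintype I] [DecidableEq I] {A : Finset I} {i₀ : I} {fα fβ c δ : ℝ}
    (hi₀ : i₀ ∈ A) (hA2 : 2 ≤ #A) (hfβ : 0 ≤ fβ) (hfαβ : fβ ≤ fα) (hfc : c ≤ fα)
    (hδ0 : 0 ≤ δ) (hδ1 : δ ≤ 1) (h1 : (1 - δ) * fα ≤ c)
    (h2 : (1 + δ * (#A - 1)) * fα + (1 + δ * (#A + #Aᶜ - 2)) * fβ < 2 * c) :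
    CoreStable (fTheta A fα fβ) c δ (starOn A i₀) := by
  rintro ⟨I', g, hgI', hweak, i, hiI', hstrict⟩
  set C := univ.filter (g.Reachable i)
  have hC : ∀ j, j ∈ C ↔ g.Reachable i j := by simp [C]
  have hCI' : ∀ j ∈ C, j ∈ I' := fun j hj => by
    by_cases hji : j = i
    · exact hji ▸ hiI'
    · obtain ⟨k, hjk, -⟩ := ((hC j).1 hj).symm.exists_adj_dist_lt hji
      exact (hgI' j k hjk).1
  have hgain := sum_lt_sum (fun j hj => hweak j (hCI' j hj)) ⟨i, (hC i).2 .rfl, hstrict⟩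
  exact hgain.not_ge <|
    sum_payoff_component_le_starOn hi₀ hA2 hfβ hfαβ hfc hδ0 hδ1 h1 h2 hC

lemma not_coreStable_starOn [Fintype I] [DecidableEq I] {A : Finset I} {i₀ : I}
    {fα fβ c δ : ℝ} (hi₀ : i₀ ∈ A) (hA2 : 2 ≤ #A) (hfc : fα < c) :
    ¬ CoreStable (fTheta A fα fβ) c δ (starOn A i₀) := by
  have hloss : payoff (fTheta A fα fβ) c δ (starOn A i₀) i₀ < payoff (fTheta A fα fβ) c δ ⊥ i₀ := by
    have hA2' : (2 : ℝ) ≤ #A := by exact_mod_cast hA2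
    rw [payoff_starOn_center hi₀, payoff_bot]
    nlinarith
  exact fun h => h ⟨{i₀}, ⊥, fun _ _ h => h.elim, by simpa using hloss.le, i₀,
    mem_singleton_self _, hloss⟩

theorem prop5f_general {I : Type*} [Fintype I] [DecidableEq I]
    (A : Finset I) (fα fβ c δ : ℝ)
    (hfαβ : fβ < fα) (hfβ : 0 < fβ)
    (hδ0 : 0 < δ) (hδ1 : δ < 1)
    (hA2 : 2 ≤ A.card)
    (h1 : (1 - δ) * fα < c)
    (h2 : (1 + δ * ((A.card : ℝ) - 1)) * fα + (1 + δ * ((A.card : ℝ) + (Aᶜ.card : ℝ) - 2)) * fβ < 2 * c)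
    (i₀ : I) (hi₀ : i₀ ∈ A) :
    CoreStable (fTheta A fα fβ) c δ (starOn A i₀) ↔ fα ≥ c :=
  ⟨fun h => not_lt.1 fun hfc => not_coreStable_starOn hi₀ hA2 hfc h,
    fun hfc => coreStable_starOn hi₀ hA2 hfβ.le hfαβ.le hfc hδ0.le hδ1.le h1.le h2⟩

/-- Proposition 5(f): under the conditions of Theorem 2(f), the star on the
type-α agents with type-α center is core-stable iff `fα ≥ c`. -/
theorem prop5f {I : Type*} [Fintype I] [DecidableEq I]
    (A : Finset I) (fα fβ c δ : ℝ)
    (hA : 1 ≤ A.card) (hB : 1 ≤ Aᶜ.card)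
    (hfαβ : fβ < fα) (hfβ : 0 < fβ) (hc : 0 < c)
    (hδ0 : 0 < δ) (hδ1 : δ < 1)
    (hA2 : 2 ≤ A.card)
    (h1 : (1 - δ) * fα < c)
    (h2 : (1 + δ * ((A.card : ℝ) - 1)) * fα + (1 + δ * ((A.card : ℝ) + (Aᶜ.card : ℝ) - 2)) * fβ < 2 * c)
    (h3 : 2 * c < fα * (2 + δ * ((A.card : ℝ) - 2)))
    (i₀ : I) (hi₀ : i₀ ∈ A) :
    CoreStable (fTheta A fα fβ) c δ (starOn A i₀) ↔ fα ≥ c :=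
  prop5f_general A fα fβ c δ hfαβ hfβ hδ0 hδ1 hA2 h1 h2 i₀ hi₀
end
end
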